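/- For every finite poset (P, ≤), there exists a one-to-one matching market instance I = (F, W, (C_f)_{f∈F}, (C_w)_{w∈W}) in which every choice function is substitutable and consistent and satisfies |C_a(T)| ≤ 1 for every agent a and every set T, together with a bijection θ from the family D(P) of lower closed sets of P onto the set S of stable matchings of I, such that for all T, T' ∈ D(P): T ⊇ T' if and only if C_f(θ(T)(f) ∪ θ(T')(f)) = θ(T)(f) for every firm f ∈ F. That is, the lattice (D(P), ⊇) is order-isomorphic to the stable matching lattice of a one-to-one matching market. -/
import Mathlib


open Finset

/-- A choice function is substitutable if `a ∈ C S` implies `a ∈ C (T ∪ {a})`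
for every `T ⊆ S`. -/
def Substitutable {α : Type*} [DecidableEq α] (C : Finset α → Finset α) : Prop :=
  ∀ (S T : Finset α) (a : α), T ⊆ S → a ∈ C S → a ∈ C (insert a T)

/-- A choice function is consistent if `C S ⊆ T ⊆ S` implies `C T = C S`. -/
def Consistent {α : Type*} (C : Finset α → Finset α) : Prop :=
  ∀ (S T : Finset α), C S ⊆ T → T ⊆ S → C T = C S

/-- The set of workers matched to firm `f` in the matching `μ`. -/
def matchedW {F W : Type*} [DecidableEq F] [DecidableEq W]
    (μ : Finset (F × W)) (f : F) : Finset W :=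
  (μ.filter fun p => p.1 = f).image Prod.snd

/-- The set of firms matched to worker `w` in the matching `μ`. -/
def matchedF {F W : Type*} [DecidableEq F] [DecidableEq W]
    (μ : Finset (F × W)) (w : W) : Finset F :=
  (μ.filter fun p => p.2 = w).image Prod.fst

/-- A matching is stable if it is individually rational and has no blocking pair. -/
def IsStable {F W : Type*} [DecidableEq F] [DecidableEq W]
    (Cf : F → Finset W → Finset W) (Cw : W → Finset F → Finset F)
    (μ : Finset (F × W)) : Prop :=
  (∀ f, Cf f (matchedW μ f) = matchedW μ f) ∧
  (∀ w, Cw w (matchedF μ w) = matchedF μ w) ∧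
  (∀ f w, (f, w) ∉ μ →
    ¬ (f ∈ Cw w (insert f (matchedF μ w)) ∧ w ∈ Cf f (insert w (matchedW μ f))))

/-- The firm (partial) order on matchings: `μ ⪰ μ'` iff
`C_f(μ(f) ∪ μ'(f)) = μ(f)` for every firm `f`. -/
def FirmGE {F W : Type*} [DecidableEq F] [DecidableEq W]
    (Cf : F → Finset W → Finset W) (μ μ' : Finset (F × W)) : Prop :=
  ∀ f, Cf f (matchedW μ f ∪ matchedW μ' f) = matchedW μ f

/-- A matching market instance: finite disjoint sets of firms and workers together
with choice functions satisfying `C_a(S) ⊆ S`. -/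
structure MatchingMarket where
  F : Type
  W : Type
  [decF : DecidableEq F]
  [decW : DecidableEq W]
  [finF : Fintype F]
  [finW : Fintype W]
  Cf : F → Finset W → Finset W
  Cw : W → Finset F → Finset F
  Cf_subset : ∀ f S, Cf f S ⊆ S
  Cw_subset : ∀ w S, Cw w S ⊆ S

attribute [instance] MatchingMarket.decF MatchingMarket.decW
  MatchingMarket.finF MatchingMarket.finW

noncomputable section GI
open Classical Sum

def choiceOf {α : Type} (ρ : α → ℕ) (S : Finset α) : Finset α :=
  S.filter (fun a => 0 < ρ a ∧ ∀ b ∈ S, ρ b ≤ ρ a)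

abbrev A (n : ℕ) := Fin n ⊕ Fin n

variable (n : ℕ) (lt : Fin n → Fin n → Prop)

def rF : A n → A n → ℕ
  | inl r, inl s => if s = r then n + 2 else if lt r s then 2 + s.val else 0
  | inl r, inr s => if s = r then 1 else 0
  | inr r, inl s => if s = r then 1 else 0
  | inr r, inr s => if s = r then 2 else 0

def rW : A n → A n → ℕ
  | inl s, inl r => if r = s then 1 else if lt r s then 2 + r.val else 0
  | inl s, inr r => if r = s then n + 2 else 0
  | inr s, inl r => if r = s then 2 else 0
  | inr s, inr r => if r = s then 1 else 0

variable {n lt}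

theorem rF_inj (f : A n) : ∀ a b, 0 < rF n lt f a → rF n lt f a = rF n lt f b → a = b := by
  rintro (s | s) (t | t) h he <;> rcases f with r | r <;>
    simp only [rF] at h he <;> split_ifs at h he with h1 h2 h3 h4 <;>
    try omega
  all_goals subst_vars; try rfl
  all_goals (try (have := s.isLt; have := t.isLt; omega))
  all_goals exact congrArg inl (Fin.val_injective (by omega))

theorem rW_inj (w : A n) : ∀ a b, 0 < rW n lt w a → rW n lt w a = rW n lt w b → a = b := by
  rintro (s | s) (t | t) h he <;> rcases w with r | r <;>
    simp only [rW] at h he <;> split_ifs at h he with h1 h2 h3 h4 <;>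
    try omega
  all_goals subst_vars; try rfl
  all_goals (try (have := s.isLt; have := t.isLt; omega))
  all_goals exact congrArg inl (Fin.val_injective (by omega))

theorem rF_pos {f w : A n} (h : 0 < rF n lt f w) :
    (∃ r, f = inl r ∧ w = inl r) ∨
    (∃ r s, f = inl r ∧ w = inl s ∧ ¬ s = r ∧ lt r s) ∨
    (∃ r, f = inl r ∧ w = inr r) ∨
    (∃ r, f = inr r ∧ w = inl r) ∨
    (∃ r, f = inr r ∧ w = inr r) := by
  rcases f with r | r <;> rcases w with s | s <;> simp only [rF] at h <;>
    split_ifs at h with h1 h2 <;> try omega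
  · subst h1; exact Or.inl ⟨_, rfl, rfl⟩
  · exact Or.inr (Or.inl ⟨_, _, rfl, rfl, h1, h2⟩)
  · subst h1; exact Or.inr (Or.inr (Or.inl ⟨_, rfl, rfl⟩))
  · subst h1; exact Or.inr (Or.inr (Or.inr (Or.inl ⟨_, rfl, rfl⟩)))
  · subst h1; exact Or.inr (Or.inr (Or.inr (Or.inr ⟨_, rfl, rfl⟩)))

theorem rW_pos {w f : A n} (h : 0 < rW n lt w f) :
    (∃ r, w = inl r ∧ f = inl r) ∨
    (∃ r s, w = inl s ∧ f = inl r ∧ ¬ r = s ∧ lt r s) ∨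
    (∃ r, w = inl r ∧ f = inr r) ∨
    (∃ r, w = inr r ∧ f = inl r) ∨
    (∃ r, w = inr r ∧ f = inr r) := by
  rcases w with s | s <;> rcases f with r | r <;> simp only [rW] at h <;>
    split_ifs at h with h1 h2 <;> try omega
  · subst h1; exact Or.inl ⟨_, rfl, rfl⟩
  · exact Or.inr (Or.inl ⟨_, _, rfl, rfl, h1, h2⟩)
  · subst h1; exact Or.inr (Or.inr (Or.inl ⟨_, rfl, rfl⟩))
  · subst h1; exact Or.inr (Or.inr (Or.inr (Or.inl ⟨_, rfl, rfl⟩)))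
  · subst h1; exact Or.inr (Or.inr (Or.inr (Or.inr ⟨_, rfl, rfl⟩)))



theorem mem_matchedW {F W : Type*} [DecidableEq F] [DecidableEq W]
    {μ : Finset (F × W)} {f : F} {w : W} : w ∈ matchedW μ f ↔ (f, w) ∈ μ := by
  simp only [matchedW, Finset.mem_image, Finset.mem_filter]
  constructor
  · rintro ⟨⟨pf, pw⟩, ⟨hm, rfl⟩, rfl⟩; exact hm
  · intro h; exact ⟨(f, w), ⟨h, rfl⟩, rfl⟩

theorem mem_matchedF {F W : Type*} [DecidableEq F] [DecidableEq W]
    {μ : Finset (F × W)} {f : F} {w : W} : f ∈ matchedF μ w ↔ (f, w) ∈ μ := by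
  simp only [matchedF, Finset.mem_image, Finset.mem_filter]
  constructor
  · rintro ⟨⟨pf, pw⟩, ⟨hm, rfl⟩, rfl⟩; exact hm
  · intro h; exact ⟨(f, w), ⟨h, rfl⟩, rfl⟩

def partner (S : Finset (Fin n)) : A n → A n
  | inl r => if r ∈ S then inl r else inr r
  | inr r => if r ∈ S then inr r else inl r

theorem partner_partner (S : Finset (Fin n)) (x : A n) :
    partner S (partner S x) = x := by
  rcases x with r | r <;> by_cases h : r ∈ S <;> simp [partner, h]

theorem rF_partner_pos (S : Finset (Fin n)) (f : A n) : 0 < rF n lt f (partner S f) := by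
  rcases f with r | r <;> by_cases h : r ∈ S <;> simp [partner, h, rF]

theorem rW_partner_pos (S : Finset (Fin n)) (w : A n) : 0 < rW n lt w (partner S w) := by
  rcases w with r | r <;> by_cases h : r ∈ S <;> simp [partner, h, rW]

def mu (S : Finset (Fin n)) : Finset (A n × A n) :=
  Finset.univ.image (fun f => (f, partner S f))

theorem mem_mu {S : Finset (Fin n)} {f w : A n} :
    (f, w) ∈ mu S ↔ w = partner S f := by
  simp only [mu, Finset.mem_image, Finset.mem_univ, true_and, Prod.mk.injEq]
  constructor
  · rintro ⟨g, rfl, rfl⟩; rfl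
  · rintro rfl; exact ⟨f, rfl, rfl⟩

theorem matchedW_mu (S : Finset (Fin n)) (f : A n) :
    matchedW (mu S) f = {partner S f} := by
  ext w; rw [mem_matchedW, mem_mu, Finset.mem_singleton]

theorem matchedF_mu (S : Finset (Fin n)) (w : A n) :
    matchedF (mu S) w = {partner S w} := by
  ext f; rw [mem_matchedF, mem_mu, Finset.mem_singleton]
  constructor
  · rintro rfl; rw [partner_partner]
  · rintro rfl; rw [partner_partner]


theorem mem_choiceOf' {α : Type} {ρ : α → ℕ} {S : Finset α} {a : α} :
    a ∈ choiceOf ρ S ↔ a ∈ S ∧ 0 < ρ a ∧ ∀ b ∈ S, ρ b ≤ ρ a := by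
  simp [choiceOf]

theorem choiceOf_singleton' {α : Type} {ρ : α → ℕ} {a : α} (h : 0 < ρ a) :
    choiceOf ρ {a} = {a} := by
  ext b; rw [mem_choiceOf']; simp only [Finset.mem_singleton]
  constructor
  · rintro ⟨rfl, _⟩; rfl
  · rintro rfl; exact ⟨rfl, h, by rintro b rfl; exact le_refl _⟩

theorem stable_mu {S : Finset (Fin n)} (hirr : ∀ r, ¬ lt r r)
    (hlow : ∀ r s, lt r s → s ∈ S → r ∈ S) :
    IsStable (fun f T => choiceOf (rF n lt f) T) (fun w T => choiceOf (rW n lt w) T) (mu S) := by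
  refine ⟨fun f => ?_, fun w => ?_, fun f w hnm => ?_⟩
  · rw [matchedW_mu]; exact choiceOf_singleton' (rF_partner_pos S f)
  · rw [matchedF_mu]; exact choiceOf_singleton' (rW_partner_pos S w)
  · rw [matchedW_mu, matchedF_mu]
    rintro ⟨hwside, hfside⟩
    rw [mem_choiceOf'] at hwside hfside
    obtain ⟨-, h1, h2⟩ := hwside
    obtain ⟨-, h3, h4⟩ := hfside
    have h2' := h2 (partner S w) (Finset.mem_insert.2 (Or.inr (Finset.mem_singleton_self _)))
    have h4' := h4 (partner S f) (Finset.mem_insert.2 (Or.inr (Finset.mem_singleton_self _)))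
    rw [mem_mu] at hnm
    -- case analysis
    rcases rF_pos h3 with ⟨r, rfl, rfl⟩ | ⟨r, s, rfl, rfl, hsr, hlt⟩ | ⟨r, rfl, rfl⟩ |
      ⟨r, rfl, rfl⟩ | ⟨r, rfl, rfl⟩
    · -- f = inl r, w = inl r
      by_cases hr : r ∈ S
      · exact hnm (by simp [partner, hr])
      · simp only [partner, if_neg hr] at h2'
        simp [rW] at h2'
    · -- f = inl r, w = inl s, lt r s
      by_cases hs : s ∈ S
      · by_cases hr : r ∈ S
        · simp only [partner, if_pos hr] at h4'
          simp [rF, hsr, hlt] at h4'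
          have := s.isLt; omega
        · exact hr (hlow r s hlt hs)
      · simp only [partner, if_neg hs] at h2'
        simp [rW, show ¬ r = s by rintro rfl; exact hirr r hlt] at h2'
        rw [if_pos hlt] at h2'
        have := r.isLt; omega
    · -- f = inl r, w = inr r
      by_cases hr : r ∈ S
      · simp only [partner, if_pos hr] at h4'
        simp [rF] at h4'
      · exact hnm (by simp [partner, hr])
    · -- f = inr r, w = inl r
      by_cases hr : r ∈ S
      · simp only [partner, if_pos hr] at h4'
        simp [rF] at h4'
      · exact hnm (by simp [partner, hr])
    · -- f = inr r, w = inr r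
      by_cases hr : r ∈ S
      · exact hnm (by simp [partner, hr])
      · simp only [partner, if_neg hr] at h2'
        simp [rW] at h2'

theorem choiceOf_card' {α : Type} (ρ : α → ℕ) (hinj : ∀ a b, 0 < ρ a → ρ a = ρ b → a = b)
    (S : Finset α) : (choiceOf ρ S).card ≤ 1 := by
  refine Finset.card_le_one.2 fun a ha b hb => ?_
  rw [mem_choiceOf'] at ha hb
  exact hinj a b ha.2.1 (le_antisymm (hb.2.2 a ha.1) (ha.2.2 b hb.1))

theorem rF_pos_inl {r : Fin n} {w : A n} (h : 0 < rF n lt (inl r) w) :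
    w = inl r ∨ w = inr r ∨ ∃ s, w = inl s ∧ lt r s ∧ ¬ s = r := by
  rcases w with s | s <;> simp only [rF] at h <;> split_ifs at h with h1 h2 <;> try omega
  · subst h1; exact Or.inl rfl
  · exact Or.inr (Or.inr ⟨s, rfl, h2, h1⟩)
  · subst h1; exact Or.inr (Or.inl rfl)

theorem rF_pos_inr {r : Fin n} {w : A n} (h : 0 < rF n lt (inr r) w) :
    w = inl r ∨ w = inr r := by
  rcases w with s | s <;> simp only [rF] at h <;> split_ifs at h with h1 <;> try omega
  · subst h1; exact Or.inl rfl
  · subst h1; exact Or.inr rfl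

theorem rW_pos_inl {s : Fin n} {f : A n} (h : 0 < rW n lt (inl s) f) :
    f = inl s ∨ f = inr s ∨ ∃ q, f = inl q ∧ lt q s := by
  rcases f with q | q <;> simp only [rW] at h <;> split_ifs at h with h1 h2 <;> try omega
  · subst h1; exact Or.inl rfl
  · exact Or.inr (Or.inr ⟨q, rfl, h2⟩)
  · subst h1; exact Or.inr (Or.inl rfl)

theorem rW_pos_inr {s : Fin n} {f : A n} (h : 0 < rW n lt (inr s) f) :
    f = inl s ∨ f = inr s := by
  rcases f with q | q <;> simp only [rW] at h <;> split_ifs at h with h1 <;> try omega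
  · subst h1; exact Or.inl rfl
  · subst h1; exact Or.inr rfl

theorem rF_inr_le {r : Fin n} (w : A n) : rF n lt (inr r) w ≤ 2 := by
  rcases w with s | s <;> simp only [rF] <;> split_ifs <;> omega

theorem stable_eq_mu {μ : Finset (A n × A n)} (hirr : ∀ r, ¬ lt r r)
    (hwf : WellFounded lt)
    (hst : IsStable (fun f T => choiceOf (rF n lt f) T)
      (fun w T => choiceOf (rW n lt w) T) μ) :
    ∃ S : Finset (Fin n), (∀ r s, lt r s → s ∈ S → r ∈ S) ∧ μ = mu S := by
  classical
  obtain ⟨hIRf, hIRw, hnb⟩ := hst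
  have hpos : ∀ f w, (f, w) ∈ μ → 0 < rF n lt f w ∧ 0 < rW n lt w f := by
    intro f w h
    constructor
    · have hw : w ∈ matchedW μ f := mem_matchedW.2 h
      rw [← hIRf f] at hw
      exact (mem_choiceOf'.1 hw).2.1
    · have hf : f ∈ matchedF μ w := mem_matchedF.2 h
      rw [← hIRw w] at hf
      exact (mem_choiceOf'.1 hf).2.1
  have huniqW : ∀ f w w', (f, w) ∈ μ → (f, w') ∈ μ → w = w' := by
    intro f w w' h h'
    have hc : (matchedW μ f).card ≤ 1 := by
      rw [← hIRf f]; exact choiceOf_card' _ (rF_inj f) _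
    exact Finset.card_le_one.1 hc w (mem_matchedW.2 h) w' (mem_matchedW.2 h')
  have huniqF : ∀ w f f', (f, w) ∈ μ → (f', w) ∈ μ → f = f' := by
    intro w f f' h h'
    have hc : (matchedF μ w).card ≤ 1 := by
      rw [← hIRw w]; exact choiceOf_card' _ (rW_inj w) _
    exact Finset.card_le_one.1 hc f (mem_matchedF.2 h) f' (mem_matchedF.2 h')
  have hblock : ∀ f w, (f, w) ∉ μ → 0 < rW n lt w f → 0 < rF n lt f w →
      (∀ f', (f', w) ∈ μ → rW n lt w f' ≤ rW n lt w f) →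
      (∀ w', (f, w') ∈ μ → rF n lt f w' ≤ rF n lt f w) → False := by
    intro f w hnm hpw hpf hW hF
    refine hnb f w hnm ⟨?_, ?_⟩
    · refine mem_choiceOf'.2 ⟨Finset.mem_insert_self _ _, hpw, fun b hb => ?_⟩
      rcases Finset.mem_insert.1 hb with rfl | hb
      · exact le_refl _
      · exact hW b (mem_matchedF.1 hb)
    · refine mem_choiceOf'.2 ⟨Finset.mem_insert_self _ _, hpf, fun b hb => ?_⟩
      rcases Finset.mem_insert.1 hb with rfl | hb
      · exact le_refl _
      · exact hF b (mem_matchedW.1 hb)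
  have noCross : ∀ r s, lt r s → (inl r, inl s) ∉ μ := by
    intro r
    induction r using hwf.induction with
    | _ r IH =>
      intro s hrs hin
      have hsne : ¬ s = r := by rintro rfl; exact hirr _ hrs
      have hbr : (inr r, inr r) ∈ μ := by
        by_contra hbr
        refine hblock (inr r) (inr r) hbr (by simp [rW]) (by simp [rF])
          (fun f' hf' => ?_) (fun w' hw' => ?_)
        · exfalso
          rcases rW_pos_inr (hpos _ _ hf').2 with rfl | rfl
          · cases huniqW _ _ _ hf' hin
          · exact hbr hf'
        · calc rF n lt (inr r) w' ≤ 2 := rF_inr_le w'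
            _ ≤ rF n lt (inr r) (inr r) := by simp [rF]
      have hxr : ∀ f', (f', inl r) ∈ μ → False := by
        intro f' hf'
        rcases rW_pos_inl (hpos _ _ hf').2 with rfl | rfl | ⟨q, rfl, hq⟩
        · exact hsne (Sum.inl.inj (huniqW _ _ _ hin hf'))
        · cases huniqW _ _ _ hf' hbr
        · exact IH q hq r hq hf'
      refine hblock (inl r) (inl r) (fun h => hsne (Sum.inl.inj (huniqW _ _ _ hin h)))
        (by simp [rW]) (by simp [rF]) (fun f' hf' => (hxr f' hf').elim) (fun w' hw' => ?_)
      have hws : w' = inl s := huniqW _ _ _ hw' hin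
      subst hws
      have := s.isLt
      simp [rF, hsne, hrs]
      omega
  have gadget : ∀ p, ((inl p, inl p) ∈ μ ∧ (inr p, inr p) ∈ μ) ∨
      ((inl p, inr p) ∈ μ ∧ (inr p, inl p) ∈ μ) := by
    intro p
    have hb : (inr p, inl p) ∈ μ ∨ (inr p, inr p) ∈ μ := by
      by_contra hcon
      push_neg at hcon
      obtain ⟨hbx, hby⟩ := hcon
      have hbnone : ∀ w', (inr p, w') ∈ μ → False := by
        intro w' hw'
        rcases rF_pos_inr (hpos _ _ hw').1 with rfl | rfl
        exacts [hbx hw', hby hw']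
      by_cases hay : (inl p, inr p) ∈ μ
      · have hxnone : ∀ f', (f', inl p) ∈ μ → False := by
          intro f' hf'
          rcases rW_pos_inl (hpos _ _ hf').2 with rfl | rfl | ⟨q, rfl, hq⟩
          · cases huniqW _ _ _ hf' hay
          · exact hbx hf'
          · exact noCross q p hq hf'
        exact hblock (inr p) (inl p) hbx (by simp [rW]) (by simp [rF])
          (fun f' hf' => (hxnone f' hf').elim) (fun w' hw' => (hbnone w' hw').elim)
      · have hynone : ∀ f', (f', inr p) ∈ μ → False := by
          intro f' hf'
          rcases rW_pos_inr (hpos _ _ hf').2 with rfl | rfl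
          exacts [hay hf', hby hf']
        exact hblock (inr p) (inr p) hby (by simp [rW]) (by simp [rF])
          (fun f' hf' => (hynone f' hf').elim) (fun w' hw' => (hbnone w' hw').elim)
    rcases hb with hbx | hby
    · refine Or.inr ⟨?_, hbx⟩
      by_contra hay
      have hynone : ∀ f', (f', inr p) ∈ μ → False := by
        intro f' hf'
        rcases rW_pos_inr (hpos _ _ hf').2 with rfl | rfl
        · exact hay hf'
        · cases huniqW _ _ _ hf' hbx
      have hanone : ∀ w', (inl p, w') ∈ μ → False := by
        intro w' hw'
        rcases rF_pos_inl (hpos _ _ hw').1 with rfl | rfl | ⟨t, rfl, ht, -⟩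
        · cases huniqF _ _ _ hw' hbx
        · exact hay hw'
        · exact noCross p t ht hw'
      exact hblock (inl p) (inr p) hay (by simp [rW]) (by simp [rF])
        (fun f' hf' => (hynone f' hf').elim) (fun w' hw' => (hanone w' hw').elim)
    · refine Or.inl ⟨?_, hby⟩
      by_contra hax
      have hxnone : ∀ f', (f', inl p) ∈ μ → False := by
        intro f' hf'
        rcases rW_pos_inl (hpos _ _ hf').2 with rfl | rfl | ⟨q, rfl, hq⟩
        · exact hax hf'
        · cases huniqW _ _ _ hf' hby
        · exact noCross q p hq hf'
      have hanone : ∀ w', (inl p, w') ∈ μ → False := by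
        intro w' hw'
        rcases rF_pos_inl (hpos _ _ hw').1 with rfl | rfl | ⟨t, rfl, ht, -⟩
        · exact hax hw'
        · cases huniqF _ _ _ hw' hby
        · exact noCross p t ht hw'
      exact hblock (inl p) (inl p) hax (by simp [rW]) (by simp [rF])
        (fun f' hf' => (hxnone f' hf').elim) (fun w' hw' => (hanone w' hw').elim)
  set T : Finset (Fin n) := Finset.univ.filter (fun p => (inl p, inl p) ∈ μ) with hT
  have hmemT : ∀ p, p ∈ T ↔ (inl p, inl p) ∈ μ := by
    intro p; simp [hT]
  refine ⟨T, ?_, ?_⟩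
  · -- lower closed
    intro r s hrs hs
    by_contra hr
    have hins : (inl s, inl s) ∈ μ := (hmemT s).1 hs
    have h1 : (inl r, inr r) ∈ μ := by
      rcases gadget r with ⟨ha, -⟩ | ⟨ha, -⟩
      · exact absurd ((hmemT r).2 ha) hr
      · exact ha
    have hsne : ¬ s = r := by rintro rfl; exact hirr _ hrs
    have hrne : ¬ r = s := fun h => hsne h.symm
    have := r.isLt
    have := s.isLt
    refine hblock (inl r) (inl s) (fun h => ?_) ?_ ?_ (fun f' hf' => ?_) (fun w' hw' => ?_)
    · cases huniqW _ _ _ h h1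
    · simp [rW, hrne, hrs]
    · simp [rF, hsne, hrs]
    · have : f' = inl s := huniqF _ _ _ hf' hins
      subst this
      simp [rW, hrne, hrs]
      omega
    · have : w' = inr r := huniqW _ _ _ hw' h1
      subst this
      simp [rF, hsne, hrs]
      omega
  · -- μ = mu T
    ext ⟨f, w⟩
    rw [mem_mu]
    constructor
    · intro h
      rcases f with p | p
      · rcases rF_pos_inl (hpos _ _ h).1 with rfl | rfl | ⟨t, rfl, ht, -⟩
        · have hp : p ∈ T := (hmemT p).2 h
          simp [partner, hp]
        · have hp : p ∉ T := by
            intro hp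
            cases huniqW _ _ _ h ((hmemT p).1 hp)
          simp [partner, hp]
        · exact absurd h (noCross p t ht)
      · rcases rF_pos_inr (hpos _ _ h).1 with rfl | rfl
        · have hp : p ∉ T := by
            intro hp
            cases huniqF _ _ _ h ((hmemT p).1 hp)
          simp [partner, hp]
        · have hp : p ∈ T := by
            rcases gadget p with ⟨ha, -⟩ | ⟨-, hb⟩
            · exact (hmemT p).2 ha
            · cases huniqW _ _ _ h hb
          simp [partner, hp]
    · intro hw
      rcases f with p | p <;> by_cases hp : p ∈ T <;> simp only [partner, hp, if_true, if_false, ite_true, ite_false] at hw <;> subst hw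
      · exact (hmemT p).1 hp
      · rcases gadget p with ⟨ha, -⟩ | ⟨ha, -⟩
        · exact absurd ((hmemT p).2 ha) hp
        · exact ha
      · rcases gadget p with ⟨-, hb⟩ | ⟨ha, -⟩
        · exact hb
        · cases huniqW _ _ _ ((hmemT p).1 hp) ha
      · rcases gadget p with ⟨ha, -⟩ | ⟨-, hb⟩
        · exact absurd ((hmemT p).2 ha) hp
        · exact hb


theorem choiceOf_pair' {α : Type} {ρ : α → ℕ} {a b : α} (h : 0 < ρ a) (hb : ρ b < ρ a) :
    choiceOf ρ {a, b} = {a} := by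
  ext c; rw [mem_choiceOf']
  simp only [Finset.mem_insert, Finset.mem_singleton]
  constructor
  · rintro ⟨rfl | rfl, hpos, hmax⟩
    · rfl
    · exact absurd (hmax a (Or.inl rfl)) (not_le.2 hb)
  · rintro rfl
    exact ⟨Or.inl rfl, h, by rintro d (rfl | rfl); exacts [le_refl _, le_of_lt hb]⟩

theorem rF_val_xx (r : Fin n) : rF n lt (inl r) (inl r) = n + 2 := by simp [rF]
theorem rF_val_xy (r : Fin n) : rF n lt (inl r) (inr r) = 1 := by simp [rF]
theorem rF_val_yx (r : Fin n) : rF n lt (inr r) (inl r) = 1 := by simp [rF]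
theorem rF_val_yy (r : Fin n) : rF n lt (inr r) (inr r) = 2 := by simp [rF]

theorem choiceOf_pair2 {α : Type} {ρ : α → ℕ} {a b : α} {S : Finset α} (hmem : a ∈ S)
    (hall : ∀ c ∈ S, c = a ∨ c = b) (h : 0 < ρ a) (hb : ρ b < ρ a) :
    choiceOf ρ S = {a} := by
  ext c; rw [mem_choiceOf', Finset.mem_singleton]
  constructor
  · rintro ⟨hc, hpos, hmax⟩
    rcases hall c hc with rfl | rfl
    · rfl
    · exact absurd (hmax a hmem) (not_le.2 hb)
  · rintro rfl
    refine ⟨hmem, h, fun d hd => ?_⟩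
    rcases hall d hd with rfl | rfl
    exacts [le_refl _, le_of_lt hb]

theorem firmGE_iff {S S' : Finset (Fin n)} :
    FirmGE (fun f T => choiceOf (rF n lt f) T) (mu S) (mu S') ↔ S' ⊆ S := by
  constructor
  · intro h r hrS'
    by_contra hrS
    have h1 := h (inl r)
    rw [matchedW_mu, matchedW_mu] at h1
    simp only [partner, if_neg hrS, if_pos hrS'] at h1
    have : (inl r : A n) ∈ choiceOf (rF n lt (inl r)) ({inr r} ∪ {inl r} : Finset (A n)) := by
      refine mem_choiceOf'.2 ⟨by simp, by simp [rF], ?_⟩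
      intro b hb
      rcases Finset.mem_union.1 hb with hb | hb <;> rw [Finset.mem_singleton] at hb <;> subst hb <;>
        simp [rF]
    rw [h1, Finset.mem_singleton] at this
    cases this
  · intro hss f
    rw [matchedW_mu, matchedW_mu]
    by_cases he : partner S f = partner S' f
    · rw [he, Finset.union_idempotent]
      exact choiceOf_singleton' (by rw [he] at *; exact rF_partner_pos S' f)
    · rcases f with r | r
      · have h2 : r ∉ S' := fun h2 => he (by simp [partner, hss h2, h2])
        have h1 : r ∈ S := by
          by_contra h1
          exact he (by simp [partner, h1, h2])
        simp only [partner, if_pos h1, if_neg h2]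
        refine choiceOf_pair2 (ρ := rF n lt (inl r)) (a := inl r) (b := inr r)
          (by simp) (fun c hc => ?_) ?_ ?_
        · simpa using hc
        · rw [rF_val_xx]; omega
        · rw [rF_val_xy, rF_val_xx]; omega
      · have h2 : r ∉ S' := fun h2 => he (by simp [partner, hss h2, h2])
        have h1 : r ∈ S := by
          by_contra h1
          exact he (by simp [partner, h1, h2])
        simp only [partner, if_pos h1, if_neg h2]
        refine choiceOf_pair2 (ρ := rF n lt (inr r)) (a := inr r) (b := inl r)
          (by simp) (fun c hc => ?_) ?_ ?_
        · simpa using hc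
        · rw [rF_val_yy]; omega
        · rw [rF_val_yx, rF_val_yy]; omega

theorem choiceOf_subset' {α : Type} (ρ : α → ℕ) (S : Finset α) : choiceOf ρ S ⊆ S :=
  Finset.filter_subset _ _

theorem choiceOf_subst' {α : Type} [DecidableEq α] (ρ : α → ℕ) : Substitutable (choiceOf ρ) := by
  intro S T a hTS ha
  rw [mem_choiceOf'] at ha ⊢
  refine ⟨Finset.mem_insert_self _ _, ha.2.1, fun b hb => ?_⟩
  rcases Finset.mem_insert.1 hb with rfl | hb
  · exact le_refl _
  · exact ha.2.2 b (hTS hb)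

theorem choiceOf_cons' {α : Type} (ρ : α → ℕ) (hinj : ∀ a b, 0 < ρ a → ρ a = ρ b → a = b) :
    Consistent (choiceOf ρ) := by
  intro S T hCT hTS
  ext a
  rw [mem_choiceOf', mem_choiceOf']
  constructor
  · rintro ⟨haT, hpos, hmax⟩
    obtain ⟨m, hmS, hm⟩ := S.exists_max_image ρ ⟨a, hTS haT⟩
    have hmC : m ∈ choiceOf ρ S := mem_choiceOf'.2 ⟨hmS, lt_of_lt_of_le hpos (hm a (hTS haT)), hm⟩
    have hma := hmax m (hCT hmC)
    exact ⟨hTS haT, hpos, fun b hb => le_trans (hm b hb) hma⟩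
  · rintro ⟨haS, hpos, hmax⟩
    have haC : a ∈ choiceOf ρ S := mem_choiceOf'.2 ⟨haS, hpos, hmax⟩
    exact ⟨hCT haC, hpos, fun b hb => hmax b (hTS hb)⟩

theorem mem_mu_diag {S : Finset (Fin n)} {p : Fin n} :
    (inl p, inl p) ∈ mu S ↔ p ∈ S := by
  rw [mem_mu]
  by_cases hp : p ∈ S <;> simp [partner, hp]


/-- **Gusfield–Irving construction.** For every finite poset `P`, the lattice
`(D(P), ⊇)` of lower closed sets of `P` is order-isomorphic to the stable matching
lattice of some one-to-one matching market. -/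
theorem lower_sets_of_poset_are_a_one_to_one_stable_matching_lattice
    (P : Type*) [PartialOrder P] [Fintype P] :
    ∃ I : MatchingMarket,
      (∀ f, Substitutable (I.Cf f)) ∧ (∀ f, Consistent (I.Cf f)) ∧
      (∀ w, Substitutable (I.Cw w)) ∧ (∀ w, Consistent (I.Cw w)) ∧
      (∀ f T, (I.Cf f T).card ≤ 1) ∧ (∀ w T, (I.Cw w T).card ≤ 1) ∧
      ∃ θ : {T : Set P // IsLowerSet T} → Finset (I.F × I.W),
        (∀ T, IsStable I.Cf I.Cw (θ T)) ∧
        Function.Injective θ ∧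
        (∀ μ, IsStable I.Cf I.Cw μ → ∃ T, θ T = μ) ∧
        (∀ T T' : {T : Set P // IsLowerSet T},
          T'.1 ⊆ T.1 ↔ FirmGE I.Cf (θ T) (θ T')) := by
  classical
  set n := Fintype.card P with hn
  let e : Fin n ≃ P := (Fintype.equivFin P).symm
  let lt : Fin n → Fin n → Prop := fun i j => e i < e j
  have hirr : ∀ r, ¬ lt r r := fun r h => lt_irrefl _ h
  have hwf : WellFounded lt := InvImage.wf (fun i => e i) wellFounded_lt
  refine ⟨{ F := A n, W := A n,
            Cf := fun f T => choiceOf (rF n lt f) T,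
            Cw := fun w T => choiceOf (rW n lt w) T,
            Cf_subset := fun f S => choiceOf_subset' _ S,
            Cw_subset := fun w S => choiceOf_subset' _ S },
          fun f => choiceOf_subst' _, fun f => choiceOf_cons' _ (rF_inj f),
          fun w => choiceOf_subst' _, fun w => choiceOf_cons' _ (rW_inj w),
          fun f T => choiceOf_card' _ (rF_inj f) T,
          fun w T => choiceOf_card' _ (rW_inj w) T,
          fun T => mu (Finset.univ.filter fun i => e i ∈ T.1),
          fun T => ?_, ?_, fun μ hst => ?_, fun T T' => ?_⟩
  · -- stability
    refine stable_mu hirr ?_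
    intro r s hrs hs
    simp only [Finset.mem_filter, Finset.mem_univ, true_and] at hs ⊢
    exact T.2 (le_of_lt hrs) hs
  · -- injectivity
    intro T T' h
    apply Subtype.ext
    ext x
    have h' : mu (Finset.univ.filter fun i => e i ∈ T.1) =
        mu (Finset.univ.filter fun i => e i ∈ T'.1) := h
    have hx : ((inl (e.symm x), inl (e.symm x)) ∈
        mu (Finset.univ.filter fun i => e i ∈ T.1)) ↔
        ((inl (e.symm x), inl (e.symm x)) ∈
        mu (Finset.univ.filter fun i => e i ∈ T'.1)) := by rw [h']
    rw [mem_mu_diag, mem_mu_diag] at hx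
    simpa using hx
  · -- surjectivity
    obtain ⟨S, hlow, rfl⟩ := stable_eq_mu hirr hwf hst
    refine ⟨⟨{x | e.symm x ∈ S}, ?_⟩, ?_⟩
    · intro a b hab hb
      rcases eq_or_lt_of_le hab with rfl | hab'
      · exact hb
      · exact hlow (e.symm b) (e.symm a) (show e (e.symm b) < e (e.symm a) by simpa using hab') hb
    · congr 1
      ext i
      simp
  · -- order isomorphism
    constructor
    · intro hsub
      refine firmGE_iff.2 ?_
      intro i hi
      simp only [Finset.mem_filter, Finset.mem_univ, true_and] at hi ⊢
      exact hsub hi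
    · intro h x hx
      have h2 := firmGE_iff.1 h
      have hi : e.symm x ∈ Finset.univ.filter fun i => e i ∈ T'.1 := by
        simp only [Finset.mem_filter, Finset.mem_univ, true_and]
        simpa using hx
      have := h2 hi
      simp only [Finset.mem_filter, Finset.mem_univ, true_and] at this
      simpa using this

end GI
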